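/- arXiv:1007.3622 — 5 statements merged into one kernel-verified Lean document; each statement's English description precedes it below -/
import Mathlib

section
/- Let p be the law of a first-order Markov chain on S^T (S finite, T ≥ 2), and for 1 ≤ k ≤ T define Ū_k(s^T) := ∏_{j=1-k}^{T-1} p(s_{(j+1)∨1}^{(j+k)∧T}), the product of the marginal probabilities of all length-k windows (truncated at the boundaries) of the path s^T. Then for every 1 < k ≤ T and every path s^T with all window probabilities positive, Ū_k(s^T) = p(s^T) · Ū_{k-1}(s^T). -/
/-!
Under the Markov factorisation a window `s_m^n` contributes the left-end marginal of `s_m` and the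
transitions `s_t → s_{t+1}` for `m ≤ t < n`. Over the `T + j - 1` truncated windows of length `j`,
the left ends are `1` (in the `j - 1` windows truncated on the left) and each of `1, …, T` once,
while every transition `1 ≤ t < T` lies in exactly `j - 1` windows. Hence
`Ū_j = p(s_1)^(j-1) · ∏_m p(s_m) · (∏_t p(s_{t+1} | s_t))^(j-1)`, and raising `j` by one
multiplies this by `p(s_1) · ∏_t p(s_{t+1} | s_t) = p(s^T)`.
-/

open Finset

section WindowProduct

variable {M : Type*} [CommMonoid M] (F G : ℕ → M) (T : ℕ)

def markovWindow (m n : ℕ) : M := F m * ∏ t ∈ Ico m n, G t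

def windowProd (j : ℕ) : M :=
  ∏ i ∈ range (T + j - 1), markovWindow F G (max 1 (i + 2 - j)) (min T (i + 1))

variable {F G T}

theorem prod_window_left_ends {j : ℕ} (hj : 1 ≤ j) :
    ∏ i ∈ range (T + j - 1), F (max 1 (i + 2 - j)) = F 1 ^ (j - 1) * ∏ m ∈ range T, F (m + 1) := by
  rw [show T + j - 1 = (j - 1) + T by omega, prod_range_add]
  congr 1
  · rw [prod_congr rfl fun i hi => congrArg F (show max 1 (i + 2 - j) = 1 by
      rw [mem_range] at hi; omega), prod_const, card_range]
  · exact prod_congr rfl fun i _ => congrArg F (by omega)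

theorem prod_window_transitions {j : ℕ} (hj : 1 ≤ j) :
    ∏ i ∈ range (T + j - 1), ∏ t ∈ Ico (max 1 (i + 2 - j)) (min T (i + 1)), G t
      = (∏ t ∈ Ico 1 T, G t) ^ (j - 1) := by
  have hswap : ∏ i ∈ range (T + j - 1), ∏ t ∈ Ico (max 1 (i + 2 - j)) (min T (i + 1)), G t
      = ∏ t ∈ Ico 1 T, ∏ _i ∈ Icc t (t + j - 2), G t := by
    apply prod_comm'
    intro i t
    simp only [mem_range, mem_Ico, mem_Icc, max_le_iff, lt_min_iff]
    omega
  rw [hswap, ← prod_pow]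
  refine prod_congr rfl fun t ht => ?_
  rw [mem_Ico] at ht
  rw [prod_const, Nat.card_Icc, show t + j - 2 + 1 - t = j - 1 by omega]

theorem windowProd_eq {j : ℕ} (hj : 1 ≤ j) :
    windowProd F G T j
      = F 1 ^ (j - 1) * (∏ m ∈ range T, F (m + 1)) * (∏ t ∈ Ico 1 T, G t) ^ (j - 1) := by
  rw [windowProd, ← prod_window_left_ends hj, ← prod_window_transitions hj, ← prod_mul_distrib]
  rfl

theorem windowProd_succ {j : ℕ} (hj : 1 ≤ j) :
    windowProd F G T (j + 1) = markovWindow F G 1 T * windowProd F G T j := by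
  obtain ⟨j, rfl⟩ := Nat.exists_eq_add_of_le' hj
  rw [windowProd_eq (by omega), windowProd_eq hj, markovWindow]
  simp only [Nat.add_sub_cancel, pow_succ]
  ac_rfl

end WindowProduct

theorem stmt0_general {S : Type*} (T k : ℕ) (hk1 : 1 < k)
    (s : ℕ → S)
    -- `pm t a` is the marginal probability `P(Y_t = a)`;
    -- `q t a b` is the conditional transition probability `P(Y_{t+1} = b | Y_t = a)`.
    (pm : ℕ → S → ℝ) (q : ℕ → S → S → ℝ)
    -- `win m n` is the probability `p(s_m^n)` of the window `s_m,…,s_n`,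
    -- factored via the Markov property.
    (win : ℕ → ℕ → ℝ)
    (hwin : ∀ m n, win m n = pm m (s m) * ∏ t ∈ Finset.Ico m n, q t (s t) (s (t + 1)))
    -- `U j` is `Ū_j(s^T) = ∏_{j'=1-j}^{T-1} p(s_{(j'+1)∨1}^{(j'+j)∧T})`
    -- (reindexed by `i = j' - (1 - j) ∈ {0, …, T+j-2}`).
    (U : ℕ → ℝ)
    (hU : ∀ j, U j = ∏ i ∈ Finset.range (T + j - 1), win (max 1 (i + 2 - j)) (min T (i + 1))) :
    U k = win 1 T * U (k - 1) := by
  have hwin' : win = markovWindow (fun m => pm m (s m)) (fun t => q t (s t) (s (t + 1))) :=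
    funext₂ hwin
  have hU' : U = windowProd (fun m => pm m (s m)) (fun t => q t (s t) (s (t + 1))) T := by
    funext j
    rw [hU, hwin']
    rfl
  obtain ⟨j, rfl⟩ := Nat.exists_eq_add_of_lt hk1
  rw [hU', hwin']
  exact windowProd_succ (by omega)

/-- For a first-order Markov chain law on `S^T` (windows factor as
marginal at the left endpoint times one-step conditional transition probabilities),
the product `Ū_k` of the probabilities of all length-`k` windows (truncated at the
boundaries) of a path `s` satisfies `Ū_k = p(s^T) · Ū_{k-1}` for `1 < k ≤ T`. -/
theorem stmt0 {S : Type*} (T k : ℕ) (hT : 2 ≤ T) (hk1 : 1 < k) (hkT : k ≤ T)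
    (s : ℕ → S)
    -- `pm t a` is the marginal probability `P(Y_t = a)`;
    -- `q t a b` is the conditional transition probability `P(Y_{t+1} = b | Y_t = a)`.
    (pm : ℕ → S → ℝ) (q : ℕ → S → S → ℝ)
    -- `win m n` is the probability `p(s_m^n)` of the window `s_m,…,s_n`,
    -- factored via the Markov property.
    (win : ℕ → ℕ → ℝ)
    (hwin : ∀ m n, win m n = pm m (s m) * ∏ t ∈ Finset.Ico m n, q t (s t) (s (t + 1)))
    -- `U j` is `Ū_j(s^T) = ∏_{j'=1-j}^{T-1} p(s_{(j'+1)∨1}^{(j'+j)∧T})`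
    -- (reindexed by `i = j' - (1 - j) ∈ {0, …, T+j-2}`).
    (U : ℕ → ℝ)
    (hU : ∀ j, U j = ∏ i ∈ Finset.range (T + j - 1), win (max 1 (i + 2 - j)) (min T (i + 1)))
    -- all window probabilities of the path are positive
    (hpos : ∀ m n, 1 ≤ m → m ≤ n → n ≤ T → 0 < win m n) :
    U k = win 1 T * U (k - 1) :=
  stmt0_general T k hk1 s pm q win hwin U hU
end

section
/- With the k-block risk R̄_k(s^T) := -(1/T) log Ū_k(s^T), where Ū_k is the product of length-k window probabilities of a first-order Markov chain law p on S^T, and R̄_∞(s^T) := -(1/T) log p(s^T), one has for all 1 < k ≤ T and all paths s^T of positive probability: R̄_k(s^T) = R̄_∞(s^T) + R̄_{k-1}(s^T). -/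
/-- With the `k`-block risk `R̄_k(s^T) := -(1/T) log Ū_k(s^T)`
(`Ū_k` the product of the length-`k` window probabilities of a first-order Markov
chain law) and `R̄_∞(s^T) := -(1/T) log p(s^T)`, for all `1 < k ≤ T` and all paths of
positive probability: `R̄_k = R̄_∞ + R̄_{k-1}`. -/
theorem stmt1 {S : Type*} (T k : ℕ) (hT : 2 ≤ T) (hk1 : 1 < k) (hkT : k ≤ T)
    (s : ℕ → S)
    (pm : ℕ → S → ℝ) (q : ℕ → S → S → ℝ)
    -- `win m n` is the window probability `p(s_m^n)`, factored via the Markov property.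
    (win : ℕ → ℕ → ℝ)
    (hwin : ∀ m n, win m n = pm m (s m) * ∏ t ∈ Finset.Ico m n, q t (s t) (s (t + 1)))
    -- the path has positive probability (all marginals and transitions along it are positive)
    (hpm : ∀ t, 1 ≤ t → t ≤ T → 0 < pm t (s t))
    (hq : ∀ t, 1 ≤ t → t < T → 0 < q t (s t) (s (t + 1)))
    -- `U j = Ū_j(s^T)`
    (U : ℕ → ℝ)
    (hU : ∀ j, U j = ∏ i ∈ Finset.range (T + j - 1), win (max 1 (i + 2 - j)) (min T (i + 1)))
    -- `Rbar j = R̄_j(s^T)` and `Rinf = R̄_∞(s^T)`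
    (Rbar : ℕ → ℝ) (hRbar : ∀ j, Rbar j = -(1 / (T : ℝ)) * Real.log (U j))
    (Rinf : ℝ) (hRinf : Rinf = -(1 / (T : ℝ)) * Real.log (win 1 T)) :
    Rbar k = Rinf + Rbar (k - 1) := by
  -- positivity of windows
  have hwinpos : ∀ m n, 1 ≤ m → m ≤ T → n ≤ T → 0 < win m n := by
    intro m n h1 h2 h3
    rw [hwin]
    apply mul_pos (hpm m h1 h2)
    apply Finset.prod_pos
    intro t ht
    rw [Finset.mem_Ico] at ht
    exact hq t (le_trans h1 ht.1) (lt_of_lt_of_le ht.2 h3)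
  have hUpos : ∀ j, 0 < U j := by
    intro j
    rw [hU]
    apply Finset.prod_pos
    intro i hi
    rw [Finset.mem_range] at hi
    refine hwinpos _ _ (le_max_left _ _) ?_ (min_le_left _ _)
    apply max_le (by omega)
    omega
  -- the key multiplicative identity
  have key : U k = win 1 T * U (k - 1) := by
    have hn1 : T + k - 1 = (T + k - 2) + 1 := by omega
    have hn2 : T + (k - 1) - 1 = T + k - 2 := by omega
    set n := T + k - 2 with hn
    -- per-factor splitting
    have c : ℕ → ℝ := fun i => if i + 1 < T then q (i + 1) (s (i + 1)) (s (i + 2)) else 1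
    have hfac : ∀ i, win (max 1 (i + 1 + 2 - k)) (min T (i + 1 + 1))
        = win (max 1 (i + 2 - (k - 1))) (min T (i + 1))
          * (if i + 1 < T then q (i + 1) (s (i + 1)) (s (i + 2)) else 1) := by
      intro i
      have hm : i + 1 + 2 - k = i + 2 - (k - 1) := by omega
      rw [hm]
      by_cases h : i + 1 < T
      · rw [if_pos h]
        have h2 : min T (i + 1 + 1) = i + 2 := by omega
        have h1 : min T (i + 1) = i + 1 := by omega
        rw [h2, h1, hwin, hwin]
        have hle : max 1 (i + 2 - (k - 1)) ≤ i + 1 := by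
          apply max_le (by omega); omega
        rw [Finset.prod_Ico_succ_top hle]
        ring
      · rw [if_neg h, mul_one]
        have h2 : min T (i + 1 + 1) = T := by omega
        have h1 : min T (i + 1) = T := by omega
        rw [h1, h2]
    rw [hU k, hU (k - 1), hn1, hn2, Finset.prod_range_succ']
    have h0 : win (max 1 (0 + 2 - k)) (min T (0 + 1)) = pm 1 (s 1) := by
      have e1 : max 1 (0 + 2 - k) = 1 := by omega
      have e2 : min T (0 + 1) = 1 := by omega
      rw [e1, e2, hwin]
      simp
    rw [h0]
    have hsplit : ∀ i ∈ Finset.range n, win (max 1 (i + 1 + 2 - k)) (min T (i + 1 + 1))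
        = win (max 1 (i + 2 - (k - 1))) (min T (i + 1))
          * (if i + 1 < T then q (i + 1) (s (i + 1)) (s (i + 2)) else 1) := fun i _ => hfac i
    rw [Finset.prod_congr rfl hsplit, Finset.prod_mul_distrib]
    -- compute the product of the correction factors
    have hcorr : (∏ i ∈ Finset.range n, (if i + 1 < T then q (i + 1) (s (i + 1)) (s (i + 2)) else 1))
        = ∏ t ∈ Finset.Ico 1 T, q t (s t) (s (t + 1)) := by
      have hsub : Finset.range (T - 1) ⊆ Finset.range n := by
        apply Finset.range_subset_range.2; omega
      rw [← Finset.prod_subset hsub (by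
        intro i hi hni
        rw [Finset.mem_range] at hi hni
        rw [if_neg (by omega)])]
      rw [Finset.prod_Ico_eq_prod_range]
      apply Finset.prod_congr rfl
      intro i hi
      rw [Finset.mem_range] at hi
      rw [if_pos (by omega)]
      have : 1 + i = i + 1 := by omega
      rw [this]
    rw [hcorr, hwin 1 T]
    ring
  rw [hRbar k, hRbar (k - 1), hRinf, key,
    Real.log_mul (ne_of_gt (hwinpos 1 T le_rfl (by omega) le_rfl)) (ne_of_gt (hUpos (k - 1)))]
  ring
end

section
/- For a first-order Markov chain law p on S^T and every 1 ≤ k ≤ T and every path s^T (of positive probability), R̄_k(s^T) = (k-1)·R̄_∞(s^T) + R̄_1(s^T), where R̄_1(s^T) = -(1/T)∑_{t=1}^T log p_t(s_t) is the pointwise log-marginal risk and R̄_∞(s^T) = -(1/T) log p(s^T). -/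
/-!
Along the path every window probability factors as a starting marginal times the transition
probabilities inside the window. In `Ū_k` every transition `t → t + 1` is covered by exactly
`k - 1` windows, while the starting marginals contribute `p_1` with multiplicity `k` and each
`p_t`, `t ≥ 2`, once. Hence `Ū_k = p(s^T) ^ (k - 1) * ∏ t, p_t(s_t)`, and `-(1/T) log` of this
is the identity.
-/

open Finset

section WindowProducts

variable {M : Type*} [CommMonoid M]

lemma prod_Icc_one_eq_prod_range_succ (f : ℕ → M) (T : ℕ) :
    ∏ t ∈ Icc 1 T, f t = ∏ x ∈ range T, f (x + 1) := by
  rw [range_eq_Ico, prod_Ico_add' f 0 T 1, zero_add, Ico_add_one_right_eq_Icc]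

lemma prod_range_windowStart {k : ℕ} (hk : 1 ≤ k) (T : ℕ) (f : ℕ → M) :
    ∏ i ∈ range (T + k - 1), f (max 1 (i + 2 - k)) = f 1 ^ (k - 1) * ∏ t ∈ Icc 1 T, f t := by
  rw [show T + k - 1 = (k - 1) + T by omega, prod_range_add, prod_Icc_one_eq_prod_range_succ]
  congr 1
  · rw [prod_eq_pow_card (b := f 1), card_range]
    intro i hi
    rw [max_eq_left (by rw [mem_range] at hi; omega)]
  · exact prod_congr rfl fun x _ => by congr; omega

/-- Transition `t ∈ [1, T)` lies in exactly the `k - 1` windows `i ∈ [t, t + k - 2]`. -/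
lemma prod_range_prod_windowTransitions (k T : ℕ) (g : ℕ → M) :
    ∏ i ∈ range (T + k - 1), ∏ t ∈ Ico (max 1 (i + 2 - k)) (min T (i + 1)), g t
      = (∏ t ∈ Ico 1 T, g t) ^ (k - 1) := by
  rw [prod_comm' (t' := Ico 1 T) (s' := fun t => Icc t (t + k - 2)), ← prod_pow]
  · refine prod_congr rfl fun t ht => ?_
    rw [prod_const, Nat.card_Icc]
    congr 1
    rw [mem_Ico] at ht
    omega
  · intro i t
    simp only [mem_range, mem_Ico, mem_Icc, max_le_iff, lt_min_iff]
    omega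

lemma prod_range_markovWindow {k : ℕ} (hk : 1 ≤ k) (T : ℕ) (f g : ℕ → M) :
    ∏ i ∈ range (T + k - 1),
        (f (max 1 (i + 2 - k)) * ∏ t ∈ Ico (max 1 (i + 2 - k)) (min T (i + 1)), g t)
      = (f 1 * ∏ t ∈ Ico 1 T, g t) ^ (k - 1) * ∏ t ∈ Icc 1 T, f t := by
  rw [prod_mul_distrib, prod_range_windowStart hk, prod_range_prod_windowTransitions, mul_pow,
    mul_right_comm]

end WindowProducts

theorem stmt2_general {S : Type*} (T k : ℕ) (hT : 1 ≤ T) (hk1 : 1 ≤ k)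
    (s : ℕ → S)
    (pm : ℕ → S → ℝ) (q : ℕ → S → S → ℝ)
    -- `win m n` is the window probability `p(s_m^n)`, factored via the Markov property.
    (win : ℕ → ℕ → ℝ)
    (hwin : ∀ m n, win m n = pm m (s m) * ∏ t ∈ Finset.Ico m n, q t (s t) (s (t + 1)))
    -- the path has positive probability (all marginals and transitions along it are positive)
    (hpm : ∀ t, 1 ≤ t → t ≤ T → 0 < pm t (s t))
    (hq : ∀ t, 1 ≤ t → t < T → 0 < q t (s t) (s (t + 1)))
    -- `U j = Ū_j(s^T)`, the product of length-`j` window probabilities of `s`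
    (U : ℕ → ℝ)
    (hU : ∀ j, U j = ∏ i ∈ Finset.range (T + j - 1), win (max 1 (i + 2 - j)) (min T (i + 1)))
    (Rbar : ℕ → ℝ) (hRbar : ∀ j, Rbar j = -(1 / (T : ℝ)) * Real.log (U j))
    (Rinf : ℝ) (hRinf : Rinf = -(1 / (T : ℝ)) * Real.log (win 1 T))
    (R1 : ℝ) (hR1 : R1 = -(1 / (T : ℝ)) * ∑ t ∈ Finset.Icc 1 T, Real.log (pm t (s t))) :
    Rbar k = ((k : ℝ) - 1) * Rinf + R1 := by
  have hUk : U k = win 1 T ^ (k - 1) * ∏ t ∈ Icc 1 T, pm t (s t) := by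
    simp only [hU, hwin]
    exact prod_range_markovWindow hk1 T (fun t => pm t (s t)) fun t => q t (s t) (s (t + 1))
  have hpm_pos : ∀ t ∈ Icc 1 T, 0 < pm t (s t) := fun t ht =>
    hpm t (mem_Icc.1 ht).1 (mem_Icc.1 ht).2
  have hwin_pos : 0 < win 1 T := by
    rw [hwin]
    exact mul_pos (hpm 1 le_rfl hT)
      (prod_pos fun t ht => hq t (mem_Ico.1 ht).1 (mem_Ico.1 ht).2)
  have hlogU : Real.log (U k) =
      (k - 1 : ℕ) * Real.log (win 1 T) + ∑ t ∈ Icc 1 T, Real.log (pm t (s t)) := by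
    rw [hUk, Real.log_mul (pow_pos hwin_pos _).ne' (prod_pos hpm_pos).ne', Real.log_pow,
      Real.log_prod fun t ht => (hpm_pos t ht).ne']
  rw [hRbar, hRinf, hR1, hlogU, Nat.cast_sub hk1]
  ring

/-- For a first-order Markov chain law on `S^T` and every `1 ≤ k ≤ T`
and every path of positive probability:
`R̄_k(s^T) = (k-1)·R̄_∞(s^T) + R̄_1(s^T)`, where `R̄_1(s^T) = -(1/T)∑_{t=1}^T log p_t(s_t)`
is the pointwise log-marginal (log-pseudolikelihood) risk and `R̄_∞(s^T) = -(1/T) log p(s^T)`. -/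
theorem stmt2 {S : Type*} (T k : ℕ) (hT : 1 ≤ T) (hk1 : 1 ≤ k) (hkT : k ≤ T)
    (s : ℕ → S)
    (pm : ℕ → S → ℝ) (q : ℕ → S → S → ℝ)
    -- `win m n` is the window probability `p(s_m^n)`, factored via the Markov property.
    (win : ℕ → ℕ → ℝ)
    (hwin : ∀ m n, win m n = pm m (s m) * ∏ t ∈ Finset.Ico m n, q t (s t) (s (t + 1)))
    -- the path has positive probability (all marginals and transitions along it are positive)
    (hpm : ∀ t, 1 ≤ t → t ≤ T → 0 < pm t (s t))
    (hq : ∀ t, 1 ≤ t → t < T → 0 < q t (s t) (s (t + 1)))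
    -- `U j = Ū_j(s^T)`, the product of length-`j` window probabilities of `s`
    (U : ℕ → ℝ)
    (hU : ∀ j, U j = ∏ i ∈ Finset.range (T + j - 1), win (max 1 (i + 2 - j)) (min T (i + 1)))
    (Rbar : ℕ → ℝ) (hRbar : ∀ j, Rbar j = -(1 / (T : ℝ)) * Real.log (U j))
    (Rinf : ℝ) (hRinf : Rinf = -(1 / (T : ℝ)) * Real.log (win 1 T))
    (R1 : ℝ) (hR1 : R1 = -(1 / (T : ℝ)) * ∑ t ∈ Finset.Icc 1 T, Real.log (pm t (s t))) :
    Rbar k = ((k : ℝ) - 1) * Rinf + R1 :=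
  stmt2_general T k hT hk1 s pm q win hwin hpm hq U hU Rbar hRbar Rinf hRinf R1 hR1
end

section
/- For the recursively power-transformed forward variables α_t(j; q) of an HMM, defined by α_1(j; q) := π_j f_j(x_1) and α_{t+1}(j; q) := [∑_{i∈S} (α_t(i; q) p_{ij})^q]^{1/q} · f_j(x_{t+1}), the limit as q → ∞ exists and equals α_t(j; ∞) = max{ p(x^t, s^t) : s^t ∈ S^t, s_t = j } for every t = 1,...,T and j ∈ S. -/
/-!
Writing `m_t(j)` for the maximal joint probability of a path ending in `j` at time `t`, these
maxima satisfy the Viterbi recursion `m_{t+1}(j) = max_i (m_t(i) p_{ij}) f_j(x_{t+1})`, which is the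
forward recursion with the power mean `(∑ a_i ^ q) ^ (1/q)` replaced by `max_i a_i`. The power
mean of nonnegative numbers is squeezed between `max_i a_i` and `|S| ^ (1/q) max_i a_i`, so it
tends to the maximum as `q → ∞`, also when the `a_i` themselves converge; induction on `t` gives
the claim.
-/

open Filter Finset Topology

section PowerMean

variable {ι : Type*} [Fintype ι] [Nonempty ι]

lemma sup'_le_sum_rpow_one_div {x : ι → ℝ} (hx : ∀ i, 0 ≤ x i) {q : ℝ} (hq : 0 < q) :
    univ.sup' univ_nonempty x ≤ (∑ i, x i ^ q) ^ (1 / q) := by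
  obtain ⟨i₀, -, hi₀⟩ := exists_mem_eq_sup' univ_nonempty x
  rw [hi₀, ← Real.rpow_rpow_inv (hx i₀) hq.ne', one_div]
  exact Real.rpow_le_rpow (Real.rpow_nonneg (hx i₀) q)
    (single_le_sum (fun i _ => Real.rpow_nonneg (hx i) q) (mem_univ i₀)) (by positivity)

lemma sum_rpow_one_div_le_card_mul_sup' {x : ι → ℝ} (hx : ∀ i, 0 ≤ x i) {q : ℝ}
    (hq : 0 < q) :
    (∑ i, x i ^ q) ^ (1 / q) ≤
      (Fintype.card ι : ℝ) ^ (1 / q) * univ.sup' univ_nonempty x := by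
  have hm : 0 ≤ univ.sup' univ_nonempty x :=
    (hx (Classical.arbitrary ι)).trans (le_sup' x (mem_univ _))
  have hsum : ∑ i, x i ^ q ≤ Fintype.card ι * univ.sup' univ_nonempty x ^ q := by
    calc ∑ i, x i ^ q ≤ ∑ _i : ι, univ.sup' univ_nonempty x ^ q :=
          sum_le_sum fun i _ => Real.rpow_le_rpow (hx i) (le_sup' x (mem_univ i)) hq.le
      _ = Fintype.card ι * univ.sup' univ_nonempty x ^ q := by simp
  calc (∑ i, x i ^ q) ^ (1 / q)
      ≤ (Fintype.card ι * univ.sup' univ_nonempty x ^ q) ^ (1 / q) := by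
        gcongr
        exact sum_nonneg fun i _ => Real.rpow_nonneg (hx i) q
    _ = (Fintype.card ι : ℝ) ^ (1 / q) * univ.sup' univ_nonempty x := by
        rw [Real.mul_rpow (by positivity) (by positivity), one_div,
          Real.rpow_rpow_inv hm hq.ne']

lemma tendsto_sum_rpow_one_div_sup' {g : ℝ → ι → ℝ} {a : ι → ℝ}
    (hg : ∀ i, Tendsto (g · i) atTop (𝓝 (a i)))
    (hg₀ : ∀ᶠ q in atTop, ∀ i, 0 ≤ g q i) :
    Tendsto (fun q => (∑ i, g q i ^ q) ^ (1 / q)) atTop (𝓝 (univ.sup' univ_nonempty a)) := by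
  have hsup : Tendsto (fun q => univ.sup' univ_nonempty (g q)) atTop
      (𝓝 (univ.sup' univ_nonempty a)) :=
    Tendsto.finset_sup'_nhds_apply _ fun i _ => hg i
  have hcard : Tendsto (fun q : ℝ => (Fintype.card ι : ℝ) ^ (1 / q)) atTop (𝓝 1) := by
    have hcard₀ : (Fintype.card ι : ℝ) ≠ 0 := Nat.cast_ne_zero.mpr Fintype.card_ne_zero
    have hinv : Tendsto (fun q : ℝ => 1 / q) atTop (𝓝 0) :=
      tendsto_const_nhds.div_atTop tendsto_id
    simpa [Function.comp_def] using
      (Real.continuousAt_const_rpow (b := 0) hcard₀).tendsto.comp hinv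
  have hupper : Tendsto (fun q => (Fintype.card ι : ℝ) ^ (1 / q) * univ.sup' univ_nonempty (g q))
      atTop (𝓝 (univ.sup' univ_nonempty a)) := by
    simpa using hcard.mul hsup
  refine tendsto_of_tendsto_of_tendsto_of_le_of_le' hsup hupper ?_ ?_
  all_goals
    filter_upwards [hg₀, eventually_gt_atTop 0] with q hq₀ hq
  · exact sup'_le_sum_rpow_one_div hq₀ hq
  · exact sum_rpow_one_div_le_card_mul_sup' hq₀ hq

end PowerMean

namespace HMM

variable {S : Type*} (pi : S → ℝ) (A : S → S → ℝ) (f : ℕ → S → ℝ)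

def jointProb (t : ℕ) (s : ℕ → S) : ℝ :=
  pi (s 1) * f 1 (s 1) * ∏ u ∈ Icc 2 t, (A (s (u - 1)) (s u) * f u (s u))

variable {pi A f}

lemma jointProb_one (s : ℕ → S) : jointProb pi A f 1 s = pi (s 1) * f 1 (s 1) := by
  simp [jointProb]

lemma jointProb_succ {t : ℕ} (ht : 1 ≤ t) (s : ℕ → S) :
    jointProb pi A f (t + 1) s =
      jointProb pi A f t s * (A (s t) (s (t + 1)) * f (t + 1) (s (t + 1))) := by
  rw [jointProb, jointProb, prod_Icc_succ_top (by omega), Nat.add_sub_cancel]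
  ring

lemma jointProb_congr {t : ℕ} (ht : 1 ≤ t) {s s' : ℕ → S}
    (h : ∀ u, 1 ≤ u → u ≤ t → s u = s' u) :
    jointProb pi A f t s = jointProb pi A f t s' := by
  rw [jointProb, jointProb, h 1 le_rfl ht]
  congr 1
  refine prod_congr rfl fun u hu => ?_
  rw [mem_Icc] at hu
  rw [h (u - 1) (by omega) (by omega), h u (by omega) (by omega)]

variable [Fintype S] [Nonempty S]

variable (pi A f) in
/-- Meaningful for `t ≥ 1`; time `0` is a junk copy of time `1`. -/
def viterbi : ℕ → S → ℝ
  | 0, j | 1, j => pi j * f 1 j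
  | t + 2, j => univ.sup' univ_nonempty (fun i => viterbi (t + 1) i * A i j) * f (t + 2) j

lemma viterbi_succ {t : ℕ} (ht : 1 ≤ t) (j : S) :
    viterbi pi A f (t + 1) j =
      univ.sup' univ_nonempty (fun i => viterbi pi A f t i * A i j) * f (t + 1) j := by
  obtain ⟨t, rfl⟩ := Nat.exists_eq_add_of_le' ht
  rfl

lemma isGreatest_jointProb_viterbi (hA : ∀ i j, 0 ≤ A i j) (hf : ∀ t s, 0 ≤ f t s)
    {t : ℕ} (ht : 1 ≤ t) (j : S) :
    IsGreatest {r | ∃ s : ℕ → S, s t = j ∧ r = jointProb pi A f t s}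
      (viterbi pi A f t j) := by
  induction t, ht using Nat.le_induction generalizing j with
  | base =>
    refine ⟨⟨fun _ => j, rfl, (jointProb_one (fun _ => j)).symm⟩, ?_⟩
    rintro _ ⟨s, rfl, rfl⟩
    rw [jointProb_one]
    rfl
  | succ t ht ih =>
    rw [viterbi_succ ht]
    obtain ⟨i₀, -, hi₀⟩ :=
      exists_mem_eq_sup' univ_nonempty (fun i => viterbi pi A f t i * A i j)
    obtain ⟨⟨s, hs, hvs⟩, -⟩ := ih i₀
    constructor
    · refine ⟨Function.update s (t + 1) j, by simp, ?_⟩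
      rw [jointProb_succ ht, jointProb_congr ht (s' := s) fun u _ hu => ?_]
      · simp [hi₀, hs, hvs, mul_assoc]
      · simp [Function.update_of_ne (show u ≠ t + 1 by omega)]
    · rintro _ ⟨s, rfl, rfl⟩
      rw [jointProb_succ ht, ← mul_assoc]
      gcongr
      · exact hf _ _
      · calc jointProb pi A f t s * A (s t) (s (t + 1))
            ≤ viterbi pi A f t (s t) * A (s t) (s (t + 1)) :=
              mul_le_mul_of_nonneg_right ((ih (s t)).2 ⟨s, rfl, rfl⟩) (hA _ _)
          _ ≤ _ := le_sup' (fun i => viterbi pi A f t i * A i (s (t + 1))) (mem_univ (s t))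

end HMM

theorem stmt15_general {S : Type*} [Fintype S] [Nonempty S] (T : ℕ)
    -- fixed data `f t j = f_j(x_t)` (times 1,…,T)
    (pi : S → ℝ) (A : S → S → ℝ) (f : ℕ → S → ℝ)
    (hpi : ∀ s, 0 ≤ pi s) (hA : ∀ i j, 0 ≤ A i j) (hf : ∀ t s, 0 ≤ f t s)
    -- the transformed forward variables `α q t j = α_t(j; q)`
    (α : ℝ → ℕ → S → ℝ)
    (hα1 : ∀ (q : ℝ) (j : S), α q 1 j = pi j * f 1 j)
    (hαrec : ∀ q : ℝ, 1 ≤ q → ∀ t, 1 ≤ t → t < T → ∀ j,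
      α q (t + 1) j = (∑ i, (α q t i * A i j) ^ q) ^ (1 / q) * f (t + 1) j)
    -- `jointUpTo t s = p(x^t, s^t)` for a path `s` (indexed by times 1,…,t)
    (jointUpTo : ℕ → (ℕ → S) → ℝ)
    (hjointUpTo : ∀ t (s : ℕ → S), jointUpTo t s =
      pi (s 1) * f 1 (s 1) * ∏ u ∈ Finset.Icc 2 t, (A (s (u - 1)) (s u) * f u (s u))) :
    ∀ t, 1 ≤ t → t ≤ T → ∀ j,
      Filter.Tendsto (fun q : ℝ => α q t j) Filter.atTop
        (nhds (sSup {r : ℝ | ∃ s : ℕ → S, s t = j ∧ r = jointUpTo t s})) := by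
  have hα_nonneg : ∀ q : ℝ, 1 ≤ q → ∀ t, 1 ≤ t → t ≤ T → ∀ j, 0 ≤ α q t j := by
    intro q hq t ht
    induction t, ht using Nat.le_induction with
    | base => intro _ j; rw [hα1]; exact mul_nonneg (hpi j) (hf 1 j)
    | succ t ht ih =>
      intro htT j
      rw [hαrec q hq t ht (by omega)]
      exact mul_nonneg (Real.rpow_nonneg (sum_nonneg fun i _ =>
        Real.rpow_nonneg (mul_nonneg (ih (by omega) i) (hA i j)) q) _) (hf _ _)
  intro t ht htT j
  rw [show jointUpTo = HMM.jointProb pi A f from funext₂ hjointUpTo,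
    (HMM.isGreatest_jointProb_viterbi hA hf ht j).csSup_eq]
  induction t, ht using Nat.le_induction generalizing j with
  | base => simp only [hα1]; exact tendsto_const_nhds
  | succ t ht ih =>
    rw [HMM.viterbi_succ ht]
    refine ((tendsto_sum_rpow_one_div_sup' (fun i => (ih (by omega) i).mul_const (A i j))
      ?_).mul_const (f (t + 1) j)).congr' ?_
    all_goals filter_upwards [eventually_ge_atTop 1] with q hq
    · exact fun i => mul_nonneg (hα_nonneg q hq t ht (by omega) i) (hA i j)
    · rw [hαrec q hq t ht (by omega) j]

/-- For the recursively power-transformed forward variables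
`α_t(j; q)` of an HMM (`α_1(j; q) = π_j f_j(x_1)`,
`α_{t+1}(j; q) = [∑_i (α_t(i; q) p_{ij})^q]^{1/q} · f_j(x_{t+1})`), the limit as
`q → ∞` exists and equals `max{p(x^t, s^t) : s^t ∈ S^t, s_t = j}` for every
`1 ≤ t ≤ T` and `j ∈ S`. -/
theorem stmt15 {S : Type*} [Fintype S] [Nonempty S] (T : ℕ) (hT : 1 ≤ T)
    -- fixed data `f t j = f_j(x_t)` (times 1,…,T)
    (pi : S → ℝ) (A : S → S → ℝ) (f : ℕ → S → ℝ)
    (hpi : ∀ s, 0 ≤ pi s) (hA : ∀ i j, 0 ≤ A i j) (hf : ∀ t s, 0 ≤ f t s)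
    -- the transformed forward variables `α q t j = α_t(j; q)`
    (α : ℝ → ℕ → S → ℝ)
    (hα1 : ∀ (q : ℝ) (j : S), α q 1 j = pi j * f 1 j)
    (hαrec : ∀ q : ℝ, 1 ≤ q → ∀ t, 1 ≤ t → t < T → ∀ j,
      α q (t + 1) j = (∑ i, (α q t i * A i j) ^ q) ^ (1 / q) * f (t + 1) j)
    -- `jointUpTo t s = p(x^t, s^t)` for a path `s` (indexed by times 1,…,t)
    (jointUpTo : ℕ → (ℕ → S) → ℝ)
    (hjointUpTo : ∀ t (s : ℕ → S), jointUpTo t s =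
      pi (s 1) * f 1 (s 1) * ∏ u ∈ Finset.Icc 2 t, (A (s (u - 1)) (s u) * f u (s u))) :
    ∀ t, 1 ≤ t → t ≤ T → ∀ j,
      Filter.Tendsto (fun q : ℝ => α q t j) Filter.atTop
        (nhds (sSup {r : ℝ | ∃ s : ℕ → S, s t = j ∧ r = jointUpTo t s})) :=
  stmt15_general T pi A f hpi hA hf α hα1 hαrec jointUpTo hjointUpTo
end

section
/- For the concrete 4-state example: take S = {1,2,3,4}, T = 4, transition matrix P = (1/8)·[[0,4,2,2],[4,1,1,2],[2,1,1,4],[2,2,4,0]], initial distribution concentrated on state 2, and posterior pair-marginals induced by emission weights f_s(x_1)=f_s(x_4)=1{s=2}, f_s(x_2)=f_s(x_3)= A·1{s=1} + 1{s≠1} with A sufficiently large. Then the path (2,1,1,2) is the unique maximizer of the 2-block objective W_2(s^4) = p_{1,2}(s_1,s_2) + p_{2,3}(s_2,s_3) + p_{3,4}(s_3,s_4) (the sum of posterior probabilities of consecutive pairs), yet p(2,1,1,2) = 0 since P_{1,1} = 0; i.e., the minimizer of Rabiner's k = 2 block risk is inadmissible. -/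
/-!
Posterior mass lives only on paths `(2, a, b, 2)`, and their joint weights with the data form, up
to the factor `1/512`, an explicit symmetric matrix `J` (`bridgeWeight`, in 0-indexed states). The
three pair marginals of a path `(s₁, s₂, s₃, s₄)` are therefore a row sum of `J` (if `s₁ = 2`), the
entry `J s₂ s₃` and a column sum of `J` (if `s₄ = 2`), divided by the total mass `80A + 28`. For
`(2, 1, 1, 2)` the two outer terms are the row and column sums through state 1, each `40A`, while
every other path scores at most `72A + 12`; so `(2, 1, 1, 2)` wins once `A > 3/2`, although
`J 1 1 = 0` because `P₁₁ = 0`.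
-/

open Finset

theorem Fintype.sum_pi_fin_succ {α M : Type*} [Fintype α] [AddCommMonoid M] {n : ℕ}
    (G : (Fin (n + 1) → α) → M) : ∑ u, G u = ∑ a, ∑ v : Fin n → α, G (Fin.cons a v) := by
  rw [← (Fin.consEquiv fun _ => α).sum_comp, Fintype.sum_prod_type]
  rfl

theorem Fintype.sum_pi_fin_four {α M : Type*} [Fintype α] [AddCommMonoid M]
    (G : (Fin 4 → α) → M) : ∑ u, G u = ∑ a, ∑ b, ∑ c, ∑ d, G ![a, b, c, d] := by
  simp only [Fintype.sum_pi_fin_succ (n := _), Fintype.sum_unique]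
  rfl

section PinnedWeight

variable {α R : Type*} [Fintype α] [DecidableEq α] [AddCommMonoid R]

def pinnedWeight (c d : α) (K : α → α → R) (u : Fin 4 → α) : R :=
  if u 0 = c ∧ u 3 = d then K (u 1) (u 2) else 0

variable (c d : α) (K : α → α → R)

theorem sum_pinnedWeight : ∑ u, pinnedWeight c d K u = ∑ a, ∑ b, K a b := by
  simp only [Fintype.sum_pi_fin_four, pinnedWeight, Matrix.cons_val_zero, Matrix.cons_val_one,
    Matrix.cons_val_two, Matrix.cons_val_three]
  simp [ite_and]

theorem sum_filter_pinnedWeight_zero_one (a b : α) :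
    ∑ u with u 0 = a ∧ u 1 = b, pinnedWeight c d K u = if a = c then ∑ e, K b e else 0 := by
  simp only [sum_filter, Fintype.sum_pi_fin_four, pinnedWeight, Matrix.cons_val_zero,
    Matrix.cons_val_one, Matrix.cons_val_two, Matrix.cons_val_three]
  simp [ite_and]

theorem sum_filter_pinnedWeight_one_two (a b : α) :
    ∑ u with u 1 = a ∧ u 2 = b, pinnedWeight c d K u = K a b := by
  simp only [sum_filter, Fintype.sum_pi_fin_four, pinnedWeight, Matrix.cons_val_zero,
    Matrix.cons_val_one, Matrix.cons_val_two, Matrix.cons_val_three]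
  simp [ite_and]

theorem sum_filter_pinnedWeight_two_three (a b : α) :
    ∑ u with u 2 = a ∧ u 3 = b, pinnedWeight c d K u = if b = d then ∑ e, K e a else 0 := by
  simp only [sum_filter, Fintype.sum_pi_fin_four, pinnedWeight, Matrix.cons_val_zero,
    Matrix.cons_val_one, Matrix.cons_val_two, Matrix.cons_val_three]
  simp [ite_and]

end PinnedWeight

noncomputable def exampleTransition : Matrix (Fin 4) (Fin 4) ℝ :=
  (1 / 8 : ℝ) • !![0, 4, 2, 2; 4, 1, 1, 2; 2, 1, 1, 4; 2, 2, 4, 0]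

def exampleEmission (A : ℝ) (t s : Fin 4) : ℝ :=
  if t = 0 ∨ t = 3 then (if s = 1 then 1 else 0) else (if s = 0 then A else 1)

/-- `512` times the joint weight of the path `(1, a, b, 1)` and the data: `g a * 8 P a b * g b`,
where `g = (4A, 1, 1, 2)` is the row `8 P 1 ·` weighted by the emissions at times 2 and 3. -/
def bridgeWeight (A : ℝ) : Fin 4 → Fin 4 → ℝ :=
  !![0, 16 * A, 8 * A, 16 * A; 16 * A, 1, 1, 4; 8 * A, 1, 1, 8; 16 * A, 4, 8, 0]

theorem example_joint_eq_pinnedWeight (A : ℝ) (u : Fin 4 → Fin 4) :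
    (if u 0 = 1 then 1 else 0) * (exampleTransition (u 0) (u 1) *
      (exampleTransition (u 1) (u 2) * exampleTransition (u 2) (u 3))) *
      ∏ t, exampleEmission A t (u t) = pinnedWeight 1 1 (bridgeWeight A) u / 512 := by
  by_cases hends : u 0 = 1 ∧ u 3 = 1
  · simp only [pinnedWeight, hends.1, hends.2, Fin.prod_univ_four]
    generalize u 1 = a, u 2 = b
    fin_cases a <;> fin_cases b <;>
      simp [exampleTransition, exampleEmission, bridgeWeight] <;> ring
  · simp only [pinnedWeight, if_neg hends, zero_div]
    rcases not_and_or.mp hends with h | h <;>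
      simp [h, exampleEmission, Fin.prod_univ_four]

theorem sum_bridgeWeight (A : ℝ) : ∑ a, ∑ b, bridgeWeight A a b = 80 * A + 28 := by
  simp [Fin.sum_univ_four, bridgeWeight]
  ring

def blockScore (A : ℝ) (u : Fin 4 → Fin 4) : ℝ :=
  (if u 0 = 1 then ∑ e, bridgeWeight A (u 1) e else 0) + bridgeWeight A (u 1) (u 2) +
    (if u 3 = 1 then ∑ e, bridgeWeight A e (u 2) else 0)

theorem blockScore_target (A : ℝ) : blockScore A ![1, 0, 0, 1] = 80 * A := by
  simp [blockScore, bridgeWeight, Fin.sum_univ_four]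
  ring

theorem blockScore_lt {A : ℝ} (hA : 3 / 2 < A) {v : Fin 4 → Fin 4} (hv : v ≠ ![1, 0, 0, 1]) :
    blockScore A v < 80 * A := by
  obtain ⟨a, b, c, d, rfl⟩ : ∃ a b c d, v = ![a, b, c, d] :=
    ⟨v 0, v 1, v 2, v 3, by ext i; fin_cases i <;> rfl⟩
  simp only [blockScore, Matrix.cons_val_zero, Matrix.cons_val_one, Matrix.cons_val_two,
    Matrix.cons_val_three]
  fin_cases b <;> fin_cases c <;> simp [bridgeWeight, Fin.sum_univ_four] <;> split_ifs <;>
    simp_all <;> linarith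

/-- the concrete 4-state example. States `1,2,3,4` are encoded as
`0,1,2,3 : Fin 4` (so "state 2" is `1`). With the transition matrix
`P = (1/8)·[[0,4,2,2],[4,1,1,2],[2,1,1,4],[2,2,4,0]]`, initial distribution concentrated
on state 2, and emission weights `f_s(x_1)=f_s(x_4)=1{s=2}`,
`f_s(x_2)=f_s(x_3)=A·1{s=1}+1{s≠1}` with `A ≥ 10`, the path `(2,1,1,2)` is the unique
maximizer of the 2-block objective
`W₂(s^4) = p_{1,2}(s_1,s_2) + p_{2,3}(s_2,s_3) + p_{3,4}(s_3,s_4)` (sum of posterior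
pair-marginals), yet its prior probability is `0` (since `P_{1,1} = 0`): Rabiner's
`k = 2` block minimizer is inadmissible. -/
theorem stmt19 (A : ℝ) (hA : 10 ≤ A)
    (P : Matrix (Fin 4) (Fin 4) ℝ)
    (hP : P = (1 / 8 : ℝ) • !![0, 4, 2, 2; 4, 1, 1, 2; 2, 1, 1, 4; 2, 2, 4, 0])
    (pi : Fin 4 → ℝ) (hpi : pi = fun s => if s = 1 then 1 else 0)
    (f : Fin 4 → Fin 4 → ℝ)
    (hf : f = fun t s =>
      if t = 0 ∨ t = 3 then (if s = 1 then 1 else 0) else (if s = 0 then A else 1))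
    -- prior path probability and joint density with the data `x^4`
    (prior joint : (Fin 4 → Fin 4) → ℝ)
    (hprior : ∀ u, prior u = pi (u 0) * (P (u 0) (u 1) * (P (u 1) (u 2) * P (u 2) (u 3))))
    (hjoint : ∀ u, joint u = prior u * ∏ t, f t (u t))
    (px : ℝ) (hpx : px = ∑ u, joint u)
    -- posterior pair-marginals `pm t a b = P(Y_{t+1} = a, Y_{t+2} = b | x^4)` (0-indexed)
    (pm : Fin 3 → Fin 4 → Fin 4 → ℝ)
    (hpm : ∀ t a b, pm t a b =
      (∑ u ∈ univ.filter (fun u : Fin 4 → Fin 4 => u t.castSucc = a ∧ u t.succ = b),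
        joint u) / px)
    -- the 2-block objective: sum of posterior probabilities of consecutive pairs
    (W2 : (Fin 4 → Fin 4) → ℝ)
    (hW2 : ∀ u, W2 u = ∑ t : Fin 3, pm t (u t.castSucc) (u t.succ)) :
    (∀ v : Fin 4 → Fin 4, v ≠ ![1, 0, 0, 1] → W2 v < W2 ![1, 0, 0, 1]) ∧
      prior ![1, 0, 0, 1] = 0 := by
  subst hP hpi hf
  have hjoint' (u) : joint u = pinnedWeight 1 1 (bridgeWeight A) u / 512 := by
    rw [hjoint, hprior]
    exact example_joint_eq_pinnedWeight A u
  have hpx' : px = (80 * A + 28) / 512 := by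
    simp only [hpx, hjoint', ← sum_div, sum_pinnedWeight, sum_bridgeWeight]
  have hpm' (t a b) : pm t a b = (∑ u with u t.castSucc = a ∧ u t.succ = b,
      pinnedWeight 1 1 (bridgeWeight A) u) / (80 * A + 28) := by
    simp only [hpm, hjoint', hpx', ← sum_div]
    exact div_div_div_cancel_right₀ (by norm_num) _ _
  have hW (u) : W2 u = blockScore A u / (80 * A + 28) := by
    rw [hW2, Fin.sum_univ_three, hpm', hpm', hpm', ← add_div, ← add_div, blockScore,
      ← sum_filter_pinnedWeight_zero_one 1 1 (bridgeWeight A) (u 0),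
      ← sum_filter_pinnedWeight_one_two 1 1 (bridgeWeight A) (u 1),
      ← sum_filter_pinnedWeight_two_three 1 1 (bridgeWeight A) (u 2)]
    -- the indices `t.castSucc`, `t.succ` for the literals `t : Fin 3` only reduce definitionally
    rfl
  refine ⟨fun v hv => ?_, ?_⟩
  · rw [hW, hW, blockScore_target]
    exact div_lt_div_of_pos_right (blockScore_lt (by linarith) hv) (by linarith)
  · simp [hprior]
end
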